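/- For any synchronizing automaton 𝒜 with n ≥ 2 states, any v-minimal word u and any i ∈ supp(u), the number of equivalence classes of ℐ_i under ∼_i is at most D(2, Rnk(ℐ_i), n) + 1. -/

import Mathlib

open scoped BigOperators

set_option synthInstance.maxHeartbeats 1000000
set_option maxHeartbeats 1000000

noncomputable section

/-- Action of a word on a state: `q · u`. -/
def actW {Q A : Type*} (δ : Q → A → Q) (q : Q) (u : List A) : Q :=
  u.foldl δ q

/-- The image `Q · u` of the full state set under a word. -/
def imageSet {Q A : Type*} [Fintype Q] [DecidableEq Q] (δ : Q → A → Q) (u : List A) :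
    Finset Q :=
  Finset.image (fun q => actW δ q u) Finset.univ

/-- The rank `rk(u) = |Q · u|` of a word. -/
def wordRank {Q A : Type*} [Fintype Q] [DecidableEq Q] (δ : Q → A → Q) (u : List A) : ℕ :=
  (imageSet δ u).card

/-- A word is reset (synchronizing) if `|Q · u| = 1`. -/
def IsReset {Q A : Type*} [Fintype Q] [DecidableEq Q] (δ : Q → A → Q) (u : List A) : Prop :=
  wordRank δ u = 1

/-- The automaton is synchronizing if it admits a reset word. -/
def IsSynchronizing {Q A : Type*} [Fintype Q] [DecidableEq Q] (δ : Q → A → Q) : Prop :=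
  ∃ u : List A, IsReset δ u

/-- `Syn(𝒜)`, the set of reset words. -/
def SynWords {Q A : Type*} [Fintype Q] [DecidableEq Q] (δ : Q → A → Q) : Set (List A) :=
  {u | IsReset δ u}

/-- The hyperplane `w⊥ = {v ∈ ℂQ : ∑ q, v q = 0}`. -/
def Wperp (Q : Type*) [Fintype Q] : Submodule ℂ (Q → ℂ) :=
  LinearMap.ker (∑ q : Q, (LinearMap.proj q : (Q → ℂ) →ₗ[ℂ] ℂ))

theorem mem_Wperp {Q : Type*} [Fintype Q] (v : Q → ℂ) :
    v ∈ Wperp Q ↔ ∑ q : Q, v q = 0 := by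
  simp [Wperp, LinearMap.mem_ker, LinearMap.sum_apply]

/-- The (right) action of a word on row vectors `v ↦ v·π(u)`. -/
def piLin {Q A : Type*} [Fintype Q] [DecidableEq Q] (δ : Q → A → Q) (u : List A) :
    (Q → ℂ) →ₗ[ℂ] (Q → ℂ) where
  toFun v := fun p => ∑ q ∈ Finset.univ.filter (fun q => actW δ q u = p), v q
  map_add' := by
    intro a b; funext p; simp [Finset.sum_add_distrib]
  map_smul' := by
    intro c v; funext p; simp [Finset.mul_sum]

theorem piLin_mem {Q A : Type*} [Fintype Q] [DecidableEq Q] (δ : Q → A → Q) (u : List A) :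
    ∀ v ∈ Wperp Q, piLin δ u v ∈ Wperp Q := by
  intro v hv
  rw [mem_Wperp] at hv ⊢
  have h := Finset.sum_fiberwise (Finset.univ : Finset Q) (fun q => actW δ q u) v
  calc ∑ p : Q, piLin δ u v p
      = ∑ p : Q, ∑ q ∈ Finset.univ.filter (fun q => actW δ q u = p), v q := rfl
    _ = ∑ q : Q, v q := h
    _ = 0 := hv

/-- The endomorphism of `w⊥` induced by a word. -/
def rhoEnd {Q A : Type*} [Fintype Q] [DecidableEq Q] (δ : Q → A → Q) (u : List A) :
    Module.End ℂ (Wperp Q) :=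
  (piLin δ u).restrict (piLin_mem δ u)

/-- The representation `ρ : Σ* → End(w⊥)`; we record it in the multiplicative opposite so
that `ρ (u ++ v) = ρ u * ρ v` (the paper's right-action convention). -/
def rho {Q A : Type*} [Fintype Q] [DecidableEq Q] (δ : Q → A → Q) (u : List A) :
    (Module.End ℂ (Wperp Q))ᵐᵒᵖ :=
  MulOpposite.op (rhoEnd δ u)

/-- `ℛ`, the ℂ-subalgebra generated by `ρ(Σ*)`. -/
def Ralg {Q A : Type*} [Fintype Q] [DecidableEq Q] (δ : Q → A → Q) :
    Subalgebra ℂ (Module.End ℂ (Wperp Q))ᵐᵒᵖ :=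
  Algebra.adjoin ℂ (Set.range (rho δ))

/-- `ρ(u)` seen as an element of `ℛ`. -/
def rhoR {Q A : Type*} [Fintype Q] [DecidableEq Q] (δ : Q → A → Q) (u : List A) :
    Ralg δ :=
  ⟨rho δ u, Algebra.subset_adjoin (Set.mem_range_self u)⟩

/-- The Jacobson radical `Rad(ℛ)` of `ℛ`, realised as a subset of the ambient algebra via
the standard characterisation: `x ∈ Rad(ℛ)` iff `x ∈ ℛ` and for every `y ∈ ℛ` the element
`1 - y * x` is left-invertible in `ℛ`. -/
def RadSet {Q A : Type*} [Fintype Q] [DecidableEq Q] (δ : Q → A → Q) :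
    Set (Module.End ℂ (Wperp Q))ᵐᵒᵖ :=
  {x | x ∈ Ralg δ ∧ ∀ y ∈ Ralg δ, ∃ z ∈ Ralg δ, z * (1 - y * x) = 1}

/-- `Rad(𝒜)`: the set of radical words, i.e. words `u` with `ρ(u) ∈ Rad(ℛ)`. -/
def RadWords {Q A : Type*} [Fintype Q] [DecidableEq Q] (δ : Q → A → Q) : Set (List A) :=
  {u | rho δ u ∈ RadSet δ}

/-- The automaton is semisimple when `Rad(𝒜) = Syn(𝒜)`. -/
def IsSemisimple {Q A : Type*} [Fintype Q] [DecidableEq Q] (δ : Q → A → Q) : Prop :=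
  RadWords δ = SynWords δ

/-- The `t`-packing number `D(t,r,n)`: the maximum size of a family of `r`-subsets of an
`n`-set in which every `t`-subset is contained in at most one member. -/
def packingNumber (t r n : ℕ) : ℕ :=
  sSup {m | ∃ F : Finset (Finset (Fin n)), F.card = m ∧ (∀ S ∈ F, S.card = r) ∧
    ∀ T : Finset (Fin n), T.card = t → (F.filter fun S => T ⊆ S).card ≤ 1}

/-- The former-rank `Fr(𝒜)`: the least rank of a non-reset word. -/
def formerRank {Q A : Type*} [Fintype Q] [DecidableEq Q] (δ : Q → A → Q) : ℕ :=
  sInf {m | ∃ u : List A, ¬ IsReset δ u ∧ wordRank δ u = m}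

/-- `Fs(𝒜)`: the set of former-synchronizing words. -/
def Fs {Q A : Type*} [Fintype Q] [DecidableEq Q] (δ : Q → A → Q) : Set (List A) :=
  {u | wordRank δ u = formerRank δ}

/-- `θ_i(u)`: the image of `ρ(u)` in the `i`-th Wedderburn–Artin matrix component, where
`e : ℛ → ∏ i, M_{n_i}(ℂ)` is the quotient map `ψ` followed by the fixed isomorphism. -/
def theta {Q A : Type*} [Fintype Q] [DecidableEq Q] (δ : Q → A → Q) {k : ℕ} {nn : Fin k → ℕ}
    (e : Ralg δ →ₐ[ℂ] ∀ i : Fin k, Matrix (Fin (nn i)) (Fin (nn i)) ℂ)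
    (u : List A) (i : Fin k) : Matrix (Fin (nn i)) (Fin (nn i)) ℂ :=
  e (rhoR δ u) i

/-- `supp(v) = {i : θ_i(v) ≠ 0}`. -/
def suppW {Q A : Type*} [Fintype Q] [DecidableEq Q] (δ : Q → A → Q) {k : ℕ} {nn : Fin k → ℕ}
    (e : Ralg δ →ₐ[ℂ] ∀ i : Fin k, Matrix (Fin (nn i)) (Fin (nn i)) ℂ)
    (v : List A) : Set (Fin k) :=
  {i | theta δ e v i ≠ 0}

/-- `u ∈ Σ* v Σ*`, i.e. `v` is a factor of `u`. -/
def InFactor {A : Type*} (v u : List A) : Prop :=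
  ∃ a b : List A, u = a ++ v ++ b

/-- `u` is a `v`-minimal word: `u ∈ Σ*vΣ*`, `supp(u)` is nonempty, and `supp(u)` is minimal
among the nonempty supports of words in `Σ*vΣ*`. -/
def IsVMinimal {Q A : Type*} [Fintype Q] [DecidableEq Q] (δ : Q → A → Q) {k : ℕ}
    {nn : Fin k → ℕ}
    (e : Ralg δ →ₐ[ℂ] ∀ i : Fin k, Matrix (Fin (nn i)) (Fin (nn i)) ℂ)
    (v u : List A) : Prop :=
  InFactor v u ∧ (suppW δ e u).Nonempty ∧
    ∀ z : List A, InFactor v z → suppW δ e z ⊆ suppW δ e u →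
      suppW δ e z = ∅ ∨ suppW δ e z = suppW δ e u

/-- The `i`-th factor monoid `ℳ_i = θ_i(Σ*)`. -/
def factorMonoid {Q A : Type*} [Fintype Q] [DecidableEq Q] (δ : Q → A → Q) {k : ℕ}
    {nn : Fin k → ℕ}
    (e : Ralg δ →ₐ[ℂ] ∀ i : Fin k, Matrix (Fin (nn i)) (Fin (nn i)) ℂ)
    (i : Fin k) : Set (Matrix (Fin (nn i)) (Fin (nn i)) ℂ) :=
  Set.range fun u : List A => theta δ e u i

/-- A two-sided ideal of the (sub)monoid `M`. -/
def IsSetIdeal {X : Type*} [Mul X] (M I : Set X) : Prop :=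
  I ⊆ M ∧ ∀ a ∈ M, ∀ x ∈ I, a * x ∈ I ∧ x * a ∈ I

/-- `I` is a `0`-minimal (two-sided) ideal of the monoid `M`. -/
def IsZeroMinimalIdeal {X : Type*} [Mul X] [Zero X] (M I : Set X) : Prop :=
  IsSetIdeal M I ∧ (0 : X) ∈ I ∧ I ≠ {0} ∧
    ∀ J : Set X, IsSetIdeal M J → (0 : X) ∈ J → J ⊆ I → J ≠ {0} → J = I

/-- `Rnk_i(g) = min {rk(u) : θ_i(u) = g}`. -/
def rnkElt {Q A : Type*} [Fintype Q] [DecidableEq Q] (δ : Q → A → Q) {k : ℕ}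
    {nn : Fin k → ℕ}
    (e : Ralg δ →ₐ[ℂ] ∀ i : Fin k, Matrix (Fin (nn i)) (Fin (nn i)) ℂ)
    (i : Fin k) (g : Matrix (Fin (nn i)) (Fin (nn i)) ℂ) : ℕ :=
  sInf {m | ∃ u : List A, theta δ e u i = g ∧ wordRank δ u = m}

/-- `Rnk(ℐ_i) = min {Rnk_i(g) : g ∈ ℐ_i ∖ {0}}`. -/
def rnkIdeal {Q A : Type*} [Fintype Q] [DecidableEq Q] (δ : Q → A → Q) {k : ℕ}
    {nn : Fin k → ℕ}
    (e : Ralg δ →ₐ[ℂ] ∀ i : Fin k, Matrix (Fin (nn i)) (Fin (nn i)) ℂ)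
    (i : Fin k) (I : Set (Matrix (Fin (nn i)) (Fin (nn i)) ℂ)) : ℕ :=
  sInf {m | ∃ g ∈ I, g ≠ 0 ∧ rnkElt δ e i g = m}

/-- `w` `u`-represents `g`: `w ∈ Σ*uΣ*`, `θ_i(w) = g`, and either `g = 0` or `rk(w)` is
minimum among all words with the first two properties. -/
def URepresents {Q A : Type*} [Fintype Q] [DecidableEq Q] (δ : Q → A → Q) {k : ℕ}
    {nn : Fin k → ℕ}
    (e : Ralg δ →ₐ[ℂ] ∀ i : Fin k, Matrix (Fin (nn i)) (Fin (nn i)) ℂ)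
    (u : List A) (i : Fin k) (w : List A) (g : Matrix (Fin (nn i)) (Fin (nn i)) ℂ) : Prop :=
  InFactor u w ∧ theta δ e w i = g ∧
    (g = 0 ∨ ∀ w' : List A, InFactor u w' → theta δ e w' i = g → wordRank δ w ≤ wordRank δ w')

/-- The relation `σ_i` on `ℐ_i`. -/
def sigmaRel {Q A : Type*} [Fintype Q] [DecidableEq Q] (δ : Q → A → Q) {k : ℕ}
    {nn : Fin k → ℕ}
    (e : Ralg δ →ₐ[ℂ] ∀ i : Fin k, Matrix (Fin (nn i)) (Fin (nn i)) ℂ)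
    (i : Fin k) (u : List A)
    (g f : Matrix (Fin (nn i)) (Fin (nn i)) ℂ) : Prop :=
  g = f ∨ ∃ w₁ w₂ : List A, URepresents δ e u i w₁ g ∧ URepresents δ e u i w₂ f ∧
    1 < (imageSet δ w₁ ∩ imageSet δ w₂).card

/-- `T ⊆ [1,k]` is a core. -/
def IsCore {Q A : Type*} [Fintype Q] [DecidableEq Q] (δ : Q → A → Q) {k : ℕ}
    {nn : Fin k → ℕ}
    (e : Ralg δ →ₐ[ℂ] ∀ i : Fin k, Matrix (Fin (nn i)) (Fin (nn i)) ℂ)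
    (T : Set (Fin k)) : Prop :=
  ∀ x : List A, (∀ i ∈ T, theta δ e x i = 0) → ∀ i : Fin k, theta δ e x i = 0

/-- A minimal core. -/
def IsMinimalCore {Q A : Type*} [Fintype Q] [DecidableEq Q] (δ : Q → A → Q) {k : ℕ}
    {nn : Fin k → ℕ}
    (e : Ralg δ →ₐ[ℂ] ∀ i : Fin k, Matrix (Fin (nn i)) (Fin (nn i)) ℂ)
    (T : Set (Fin k)) : Prop :=
  IsCore δ e T ∧ ∀ T' : Set (Fin k), T' ⊆ T → IsCore δ e T' → T' = T

/-- An automaton congruence. -/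
def IsCongruence {Q A : Type*} (δ : Q → A → Q) (σ : Q → Q → Prop) : Prop :=
  Equivalence σ ∧ ∀ q p : Q, σ q p → ∀ u : List A, σ (actW δ q u) (actW δ p u)

/-- A simple automaton: the only congruences are the identity and the universal relation. -/
def IsSimple {Q A : Type*} (δ : Q → A → Q) : Prop :=
  ∀ σ : Q → Q → Prop, IsCongruence δ σ → σ = Eq ∨ σ = fun _ _ => True

/-!
Let `r = Rnk(ℐ_i)`, attained by a word `w₀` with `θ_i(w₀) ≠ 0`. The images `θ_i(Σ*)` span
`M_{n_i}(ℂ)`, so `θ_i(u) ≠ 0` forces `θ_i(u) X θ_i(w₀) ≠ 0` for some `X ∈ ℳ_i`; hence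
`θ_i(Σ*uΣ*) θ_i(w₀) ℳ_i` is a nonzero ideal inside `ℐ_i` and, by `0`-minimality, equals
it. So every nonzero `g ∈ ℐ_i` is the image of a word `w₁ w₀ y` with `u` a factor of `w₁`, of
rank at most `r`: its `u`-representatives have rank exactly `r`. Picking one nonzero element in each
`∼_i`-class, the images `Q·w` of their representatives are `r`-subsets of `Q` meeting pairwise in
at most one state (otherwise the elements would be `σ_i`-related); as `r ≥ 2` (words of rank
`≤ 1` act as `0` on `w⊥`) they are distinct and form a `2`-packing. The class of `0` accounts for
the `+ 1`.
-/

theorem Matrix.mul_single_one_mul_apply {m R : Type*} [Fintype m] [DecidableEq m] [Semiring R]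
    (a g : Matrix m m R) (x t p q : m) :
    (a * Matrix.single t p (1 : R) * g) x q = a x t * g p q := by
  rw [Matrix.mul_apply, Finset.sum_eq_single p (fun j _ hj => by simp [hj]) (by simp)]
  simp

theorem Matrix.eq_zero_of_forall_mul_mul_eq_zero {m R : Type*} [Fintype m] [DecidableEq m]
    [Semiring R] [NoZeroDivisors R]
    {a g : Matrix m m R} (h : ∀ X : Matrix m m R, a * X * g = 0) (hg : g ≠ 0) : a = 0 := by
  obtain ⟨p, q, hpq⟩ : ∃ p q, g p q ≠ 0 := by
    by_contra! h'
    exact hg (Matrix.ext h')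
  ext x t
  have := congrFun (congrFun (h (Matrix.single t p 1)) x) q
  rw [Matrix.mul_single_one_mul_apply] at this
  exact (mul_eq_zero.mp this).resolve_right hpq

theorem IsZeroMinimalIdeal.exists_eq_mul_mul {X : Type*} [SemigroupWithZero X] {M I U : Set X}
    (hI : IsZeroMinimalIdeal M I) (hM : ∀ a ∈ M, ∀ b ∈ M, a * b ∈ M) (hUM : U ⊆ M)
    (hU : ∀ a ∈ M, ∀ t ∈ U, a * t ∈ U) {g : X} (hg : g ∈ I)
    (hne : ∃ t ∈ U, ∃ b ∈ M, t * g * b ≠ 0) {x : X} (hx : x ∈ I) :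
    ∃ t ∈ U, ∃ b ∈ M, x = t * g * b := by
  obtain ⟨⟨hIM, hIabs⟩, h0I, -, hmin⟩ := hI
  let K : Set X := {x | ∃ t ∈ U, ∃ b ∈ M, x = t * g * b}
  have hKI : K ⊆ I := by
    rintro _ ⟨t, ht, b, hb, rfl⟩
    exact (hIabs b hb _ (hIabs t (hUM ht) g hg).1).2
  have hK : IsSetIdeal M K := by
    refine ⟨hKI.trans hIM, ?_⟩
    rintro a ha _ ⟨t, ht, b, hb, rfl⟩
    exact ⟨⟨a * t, hU a ha t ht, b, hb, by simp only [mul_assoc]⟩,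
      ⟨t, ht, b * a, hM b hb a ha, by simp only [mul_assoc]⟩⟩
  obtain ⟨t, ht, b, hb, htgb⟩ := hne
  have h0K : (0 : X) ∈ K := ⟨t, ht, 0, hIM h0I, (mul_zero _).symm⟩
  have hK0 : K ≠ {0} := fun hK0 =>
    htgb (hK0 ▸ ⟨t, ht, b, hb, rfl⟩ : t * g * b ∈ ({0} : Set X))
  rw [← hmin K hK h0K hKI hK0] at hx
  exact hx

theorem Finset.exists_transGen_transversal {α : Type*} (T : Finset α) (ρ : α → α → Prop)
    [Std.Refl ρ] [Std.Symm ρ] :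
    ∃ R ⊆ T, (∀ a ∈ R, ∀ b ∈ R, Relation.TransGen ρ a b → a = b) ∧
      ∀ a ∈ T, ∃ b ∈ R, Relation.TransGen ρ a b := by
  classical
  let P : Finset α → Prop := fun R =>
    ∀ a ∈ R, ∀ b ∈ R, Relation.TransGen ρ a b → a = b
  obtain ⟨R, hR, hmax⟩ := Finset.exists_max_image (T.powerset.filter P) Finset.card
    ⟨∅, Finset.mem_filter.mpr ⟨Finset.empty_mem_powerset T, by simp [P]⟩⟩
  obtain ⟨hRT, hRP⟩ := Finset.mem_filter.mp hR
  refine ⟨R, Finset.mem_powerset.mp hRT, hRP, fun a ha => ?_⟩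
  by_contra! hfar
  have haR : a ∉ R := fun haR => hfar a haR (.single (refl a))
  have hins : insert a R ∈ T.powerset.filter P := by
    refine Finset.mem_filter.mpr
      ⟨Finset.mem_powerset.mpr (Finset.insert_subset ha (Finset.mem_powerset.mp hRT)), ?_⟩
    intro b hb c hc hbc
    rcases Finset.mem_insert.mp hb with rfl | hbR <;> rcases Finset.mem_insert.mp hc with rfl | hcR
    · rfl
    · exact (hfar c hcR hbc).elim
    · exact (hfar b hbR (symm hbc)).elim
    · exact hRP b hbR c hcR hbc
  have := hmax _ hins
  rw [Finset.card_insert_of_notMem haR] at this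
  omega

theorem le_packingNumber {t r n : ℕ} (F : Finset (Finset (Fin n))) (hF : ∀ S ∈ F, S.card = r)
    (hpack : ∀ T : Finset (Fin n), T.card = t → (F.filter fun S => T ⊆ S).card ≤ 1) :
    F.card ≤ packingNumber t r n := by
  refine le_csSup ⟨2 ^ n, ?_⟩ ⟨F, rfl, hF, hpack⟩
  rintro _ ⟨F', rfl, -, -⟩
  simpa using Finset.card_le_card (Finset.subset_univ F')

theorem card_le_packingNumber_two {α β : Type*} [Fintype β] [DecidableEq β] {R : Finset α}
    {S : α → Finset β} {r : ℕ} (hr : 1 < r) (hS : ∀ a ∈ R, (S a).card = r)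
    (hR : ∀ a ∈ R, ∀ b ∈ R, 1 < (S a ∩ S b).card → a = b) :
    R.card ≤ packingNumber 2 r (Fintype.card β) := by
  classical
  let S' : α → Finset (Fin (Fintype.card β)) := fun a =>
    (S a).map (Fintype.equivFin β).toEmbedding
  have hS'inter : ∀ a b, S' a ∩ S' b = (S a ∩ S b).map (Fintype.equivFin β).toEmbedding :=
    fun a b => (Finset.map_inter (S a) (S b)).symm
  have hinj : Set.InjOn S' R := by
    intro a ha b hb hab
    refine hR a ha b hb ?_
    rw [← Finset.card_map (Fintype.equivFin β).toEmbedding, ← hS'inter, hab, Finset.inter_self,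
      Finset.card_map, hS b hb]
    exact hr
  rw [← Finset.card_image_of_injOn hinj]
  refine le_packingNumber _ ?_ fun T hT => Finset.card_le_one.mpr ?_
  · simp only [Finset.mem_image]
    rintro _ ⟨a, ha, rfl⟩
    rw [Finset.card_map, hS a ha]
  · simp only [Finset.mem_filter, Finset.mem_image]
    rintro _ ⟨⟨a, ha, rfl⟩, hTa⟩ _ ⟨⟨b, hb, rfl⟩, hTb⟩
    refine congrArg S' (hR a ha b hb ?_)
    have := Finset.card_le_card (Finset.subset_inter hTa hTb)
    rw [hS'inter, Finset.card_map, hT] at this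
    omega

section Words

variable {Q A : Type*} (δ : Q → A → Q)

theorem actW_append (q : Q) (x y : List A) :
    actW δ q (x ++ y) = actW δ (actW δ q x) y :=
  List.foldl_append

theorem InFactor.append_left {u w : List A} (h : InFactor u w) (x : List A) :
    InFactor u (x ++ w) := by
  obtain ⟨a, b, rfl⟩ := h
  exact ⟨x ++ a, b, by simp⟩

theorem InFactor.append_right {u w : List A} (h : InFactor u w) (y : List A) :
    InFactor u (w ++ y) := by
  obtain ⟨a, b, rfl⟩ := h
  exact ⟨a, b ++ y, by simp⟩

theorem inFactor_append_self (u y : List A) : InFactor u (u ++ y) := ⟨[], y, rfl⟩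

variable [Fintype Q] [DecidableEq Q]

theorem imageSet_append (x y : List A) :
    imageSet δ (x ++ y) = (imageSet δ x).image (actW δ · y) := by
  simp [imageSet, Finset.image_image, Function.comp_def, actW_append]

theorem wordRank_append_left_le (x w : List A) : wordRank δ (x ++ w) ≤ wordRank δ w := by
  refine Finset.card_le_card ?_
  rw [imageSet_append]
  exact Finset.image_subset_image (Finset.subset_univ _)

theorem wordRank_append_right_le (w y : List A) : wordRank δ (w ++ y) ≤ wordRank δ w := by
  unfold wordRank
  rw [imageSet_append]
  exact Finset.card_image_le

end Words

section Representation

variable {Q A : Type*} [Fintype Q] [DecidableEq Q] (δ : Q → A → Q)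

theorem piLin_apply (u : List A) (v : Q → ℂ) (p : Q) :
    piLin δ u v p = ∑ q ∈ Finset.univ.filter (fun q => actW δ q u = p), v q :=
  rfl

theorem piLin_append (x y : List A) : piLin δ (x ++ y) = piLin δ y ∘ₗ piLin δ x := by
  ext v p
  simp only [LinearMap.comp_apply, piLin_apply]
  rw [Finset.sum_fiberwise_eq_sum_filter]
  simp [actW_append]

theorem rhoR_append (x y : List A) : rhoR δ (x ++ y) = rhoR δ x * rhoR δ y := by
  refine Subtype.ext (MulOpposite.unop_injective (LinearMap.ext fun v => Subtype.ext ?_))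
  simp [rhoR, rho, rhoEnd, piLin_append]

theorem rhoR_nil : rhoR δ ([] : List A) = 1 := by
  refine Subtype.ext (MulOpposite.unop_injective (LinearMap.ext fun v => Subtype.ext ?_))
  ext p
  simp only [rhoR, rho, rhoEnd, MulOpposite.unop_op, LinearMap.restrict_apply, piLin_apply]
  exact Finset.sum_eq_single_of_mem p (Finset.mem_filter.mpr ⟨Finset.mem_univ p, rfl⟩)
    fun q hq hqp => (hqp (Finset.mem_filter.mp hq).2).elim

theorem rhoR_congr {x y : List A} (h : ∀ q, actW δ q x = actW δ q y) :
    rhoR δ x = rhoR δ y := by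
  refine Subtype.ext (MulOpposite.unop_injective (LinearMap.ext fun v => Subtype.ext ?_))
  ext p
  simp [rhoR, rho, rhoEnd, piLin_apply, h]

theorem rhoR_eq_zero_of_wordRank_le_one {w : List A} (hw : wordRank δ w ≤ 1) :
    rhoR δ w = 0 := by
  have hconst : ∀ q q', actW δ q w = actW δ q' w := fun q q' =>
    Finset.card_le_one.mp hw _ (Finset.mem_image_of_mem _ (Finset.mem_univ q)) _
      (Finset.mem_image_of_mem _ (Finset.mem_univ q'))
  refine Subtype.ext (MulOpposite.unop_injective (LinearMap.ext fun v => Subtype.ext ?_))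
  ext p
  simp only [rhoR, rho, rhoEnd, MulOpposite.unop_op, LinearMap.restrict_apply, piLin_apply]
  by_cases hp : ∃ q, actW δ q w = p
  · obtain ⟨q₀, rfl⟩ := hp
    rw [Finset.filter_true_of_mem fun q _ => hconst q q₀]
    exact (mem_Wperp _).mp v.2
  · simp [not_exists.mp hp]

variable {k : ℕ} {nn : Fin k → ℕ}
  (e : Ralg δ →ₐ[ℂ] ∀ i : Fin k, Matrix (Fin (nn i)) (Fin (nn i)) ℂ)

theorem theta_append (x y : List A) (i : Fin k) :
    theta δ e (x ++ y) i = theta δ e x i * theta δ e y i := by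
  simp [theta, rhoR_append]

theorem theta_nil (i : Fin k) : theta δ e ([] : List A) i = 1 := by
  simp [theta, rhoR_nil]

theorem theta_congr {x y : List A} (h : ∀ q, actW δ q x = actW δ q y) (i : Fin k) :
    theta δ e x i = theta δ e y i := by
  rw [theta, theta, rhoR_congr δ h]

theorem one_lt_wordRank_of_theta_ne_zero {w : List A} {i : Fin k} (hw : theta δ e w i ≠ 0) :
    1 < wordRank δ w := by
  by_contra! hle
  exact hw (by simp [theta, rhoR_eq_zero_of_wordRank_le_one δ hle])

theorem one_mem_factorMonoid (i : Fin k) : 1 ∈ factorMonoid δ e i :=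
  ⟨[], theta_nil δ e i⟩

theorem mul_mem_factorMonoid {i : Fin k} {a b : Matrix (Fin (nn i)) (Fin (nn i)) ℂ}
    (ha : a ∈ factorMonoid δ e i) (hb : b ∈ factorMonoid δ e i) :
    a * b ∈ factorMonoid δ e i := by
  obtain ⟨x, rfl⟩ := ha
  obtain ⟨y, rfl⟩ := hb
  exact ⟨x ++ y, theta_append δ e x y i⟩

theorem factorMonoid_finite (i : Fin k) : (factorMonoid δ e i).Finite := by
  let F : List A → Q → Q := fun w q => actW δ q w
  refine (Set.finite_range fun f => theta δ e (Function.invFun F f) i).subset ?_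
  rintro _ ⟨w, rfl⟩
  exact ⟨F w, theta_congr δ e (congrFun (Function.invFun_eq (f := F) ⟨w, rfl⟩)) i⟩

theorem span_factorMonoid_eq_top (he : Function.Surjective e) (i : Fin k) :
    Submodule.span ℂ (factorMonoid δ e i) = ⊤ := by
  let π := (Pi.evalAlgHom ℂ (fun j => Matrix (Fin (nn j)) (Fin (nn j)) ℂ) i).comp e
  have hπ : Function.Surjective π := (Function.surjective_eval i).comp he
  have himage : π '' ((↑) ⁻¹' Set.range (rho δ)) = factorMonoid δ e i := by
    ext m
    constructor
    · rintro ⟨x, ⟨w, hw⟩, rfl⟩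
      exact ⟨w, by simp only [theta, show rhoR δ w = x from Subtype.ext hw]; rfl⟩
    · rintro ⟨w, rfl⟩
      exact ⟨rhoR δ w, ⟨w, rfl⟩, rfl⟩
  have hadjoin : Algebra.adjoin ℂ (factorMonoid δ e i) = ⊤ := by
    have htop : Algebra.adjoin ℂ (((↑) : Ralg δ → _) ⁻¹' Set.range (rho δ)) = ⊤ :=
      Algebra.adjoin_adjoin_coe_preimage
    rw [← himage, Algebra.adjoin_image, htop, Algebra.map_top, (AlgHom.range_eq_top π).mpr hπ]
  let M : Submonoid (Matrix (Fin (nn i)) (Fin (nn i)) ℂ) :=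
    ⟨⟨factorMonoid δ e i, mul_mem_factorMonoid δ e⟩, one_mem_factorMonoid δ e i⟩
  have hspan := congrArg Subalgebra.toSubmodule hadjoin
  rwa [Algebra.adjoin_eq_span, show Submonoid.closure (factorMonoid δ e i) = M from
    Submonoid.closure_eq M, Algebra.top_toSubmodule] at hspan

theorem exists_wordRank_eq_rnkIdeal {i : Fin k} {I : Set (Matrix (Fin (nn i)) (Fin (nn i)) ℂ)}
    (hI : IsZeroMinimalIdeal (factorMonoid δ e i) I) :
    ∃ w : List A, theta δ e w i ∈ I ∧ theta δ e w i ≠ 0 ∧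
      wordRank δ w = rnkIdeal δ e i I := by
  obtain ⟨⟨hIM, -⟩, h0I, hI0, -⟩ := hI
  obtain ⟨g, hgI, hg0⟩ : ∃ g ∈ I, g ≠ 0 := by
    by_contra! h
    exact hI0 (Set.eq_singleton_iff_unique_mem.mpr ⟨h0I, h⟩)
  unfold rnkIdeal
  obtain ⟨g₀, hg₀I, hg₀0, hg₀r⟩ :=
    Nat.sInf_mem (s := {m | ∃ g ∈ I, g ≠ 0 ∧ rnkElt δ e i g = m}) ⟨_, g, hgI, hg0, rfl⟩
  obtain ⟨w₀, hw₀⟩ := hIM hg₀I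
  unfold rnkElt at hg₀r
  obtain ⟨w, rfl, hwr⟩ :=
    Nat.sInf_mem (s := {m | ∃ w, theta δ e w i = g₀ ∧ wordRank δ w = m}) ⟨_, w₀, hw₀, rfl⟩
  exact ⟨w, hg₀I, hg₀0, hwr.trans hg₀r⟩

theorem rnkIdeal_le_wordRank {i : Fin k} {I : Set (Matrix (Fin (nn i)) (Fin (nn i)) ℂ)}
    {w : List A} (hwI : theta δ e w i ∈ I) (hw0 : theta δ e w i ≠ 0) :
    rnkIdeal δ e i I ≤ wordRank δ w := by
  have hg : rnkIdeal δ e i I ≤ rnkElt δ e i (theta δ e w i) :=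
    Nat.sInf_le ⟨_, hwI, hw0, rfl⟩
  exact hg.trans (Nat.sInf_le ⟨w, rfl, rfl⟩)

end Representation

section Representatives

variable {Q A : Type*} [Fintype Q] [DecidableEq Q] {δ : Q → A → Q}
  {k : ℕ} {nn : Fin k → ℕ} {e : Ralg δ →ₐ[ℂ] ∀ i : Fin k, Matrix (Fin (nn i)) (Fin (nn i)) ℂ}

theorem exists_theta_mul_theta_mul_ne_zero (he : Function.Surjective e) {i : Fin k}
    {u w₀ : List A} (hu : theta δ e u i ≠ 0) (hw₀ : theta δ e w₀ i ≠ 0) :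
    ∃ y : List A, theta δ e u i * theta δ e y i * theta δ e w₀ i ≠ 0 := by
  by_contra! h
  let L := LinearMap.mulRight ℂ (theta δ e w₀ i) ∘ₗ LinearMap.mulLeft ℂ (theta δ e u i)
  have hL : L = 0 := LinearMap.ext_on (span_factorMonoid_eq_top δ e he i) (by
    rintro _ ⟨y, rfl⟩
    exact h y)
  exact hu (Matrix.eq_zero_of_forall_mul_mul_eq_zero (fun X => LinearMap.congr_fun hL X) hw₀)

theorem exists_inFactor_theta_eq (he : Function.Surjective e) {i : Fin k}
    {I : Set (Matrix (Fin (nn i)) (Fin (nn i)) ℂ)}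
    (hI : IsZeroMinimalIdeal (factorMonoid δ e i) I)
    {u w₀ : List A} (hu : theta δ e u i ≠ 0) (hw₀I : theta δ e w₀ i ∈ I)
    (hw₀ : theta δ e w₀ i ≠ 0) {g : Matrix (Fin (nn i)) (Fin (nn i)) ℂ} (hg : g ∈ I) :
    ∃ w : List A, InFactor u w ∧ theta δ e w i = g ∧ wordRank δ w ≤ wordRank δ w₀ := by
  let U := {t | ∃ w : List A, InFactor u w ∧ theta δ e w i = t}
  have hUM : U ⊆ factorMonoid δ e i := by
    rintro _ ⟨w, -, rfl⟩
    exact ⟨w, rfl⟩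
  have hU : ∀ a ∈ factorMonoid δ e i, ∀ t ∈ U, a * t ∈ U := by
    rintro _ ⟨x, rfl⟩ _ ⟨w, hw, rfl⟩
    exact ⟨x ++ w, hw.append_left x, theta_append δ e x w i⟩
  have hne : ∃ t ∈ U, ∃ b ∈ factorMonoid δ e i, t * theta δ e w₀ i * b ≠ 0 := by
    obtain ⟨y, hy⟩ := exists_theta_mul_theta_mul_ne_zero he hu hw₀
    refine ⟨theta δ e (u ++ y) i, ⟨_, inFactor_append_self u y, rfl⟩, 1,
      one_mem_factorMonoid δ e i, ?_⟩
    rwa [theta_append, mul_one]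
  obtain ⟨_, ⟨w, hw, rfl⟩, _, ⟨y, rfl⟩, rfl⟩ :=
    hI.exists_eq_mul_mul (fun _ ha _ hb => mul_mem_factorMonoid δ e ha hb) hUM hU hw₀I hne hg
  refine ⟨w ++ w₀ ++ y, (hw.append_right w₀).append_right y,
    by rw [theta_append, theta_append], ?_⟩
  exact (wordRank_append_right_le δ _ y).trans (wordRank_append_left_le δ w w₀)

theorem exists_uRepresents_of_inFactor {u w : List A} (hw : InFactor u w) (i : Fin k) :
    ∃ w' : List A, URepresents δ e u i w' (theta δ e w i) ∧
      wordRank δ w' ≤ wordRank δ w := by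
  let S := {w' : List A | InFactor u w' ∧ theta δ e w' i = theta δ e w i}
  have hS : w ∈ S := ⟨hw, rfl⟩
  obtain ⟨hmin, hθ⟩ := Function.argminOn_mem (wordRank δ) S ⟨w, hS⟩
  exact ⟨_, ⟨hmin, hθ, Or.inr fun w' hw' hθ' => Function.argminOn_le (wordRank δ) S ⟨hw', hθ'⟩⟩,
    Function.argminOn_le (wordRank δ) S hS⟩

theorem exists_uRepresents_wordRank_eq_rnkIdeal (he : Function.Surjective e) {i : Fin k}
    {I : Set (Matrix (Fin (nn i)) (Fin (nn i)) ℂ)}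
    (hI : IsZeroMinimalIdeal (factorMonoid δ e i) I) {u : List A} (hu : theta δ e u i ≠ 0)
    {g : Matrix (Fin (nn i)) (Fin (nn i)) ℂ} (hg : g ∈ I) (hg0 : g ≠ 0) :
    ∃ w : List A, URepresents δ e u i w g ∧ wordRank δ w = rnkIdeal δ e i I := by
  obtain ⟨w₀, hw₀I, hw₀, hw₀r⟩ := exists_wordRank_eq_rnkIdeal δ e hI
  obtain ⟨w₁, hw₁, rfl, hw₁r⟩ := exists_inFactor_theta_eq he hI hu hw₀I hw₀ hg
  obtain ⟨w, hw, hwr⟩ := exists_uRepresents_of_inFactor (e := e) hw₁ i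
  have hθ : theta δ e w i = theta δ e w₁ i := hw.2.1
  exact ⟨w, hw, le_antisymm (by omega) (rnkIdeal_le_wordRank δ e (hθ ▸ hg) (hθ ▸ hg0))⟩

instance (i : Fin k) (u : List A) : Std.Refl (sigmaRel δ e i u) :=
  ⟨fun _ => Or.inl rfl⟩

instance (i : Fin k) (u : List A) : Std.Symm (sigmaRel δ e i u) := by
  refine ⟨fun g f h => ?_⟩
  rcases h with h | ⟨w₁, w₂, h₁, h₂, hcard⟩
  · exact Or.inl h.symm
  · exact Or.inr ⟨w₂, w₁, h₂, h₁, by rwa [Finset.inter_comm]⟩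

end Representatives

theorem stmt5_general {Q A : Type*} [Fintype Q] [DecidableEq Q] (δ : Q → A → Q)
    {k : ℕ} {nn : Fin k → ℕ}
    (e : Ralg δ →ₐ[ℂ] ∀ i : Fin k, Matrix (Fin (nn i)) (Fin (nn i)) ℂ)
    (he_surj : Function.Surjective e)
    (Ii : ∀ i : Fin k, Set (Matrix (Fin (nn i)) (Fin (nn i)) ℂ))
    (hIi : ∀ i : Fin k, IsZeroMinimalIdeal (factorMonoid δ e i) (Ii i))
    (u : List A) (i : Fin k) (hi : i ∈ suppW δ e u) :
    ∃ R : Finset (Matrix (Fin (nn i)) (Fin (nn i)) ℂ),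
      ↑R ⊆ Ii i ∧
      R.card ≤ packingNumber 2 (rnkIdeal δ e i (Ii i)) (Fintype.card Q) + 1 ∧
      ∀ g ∈ Ii i, ∃ h ∈ R, Relation.TransGen (sigmaRel δ e i u) g h := by
  classical
  have hr : 1 < rnkIdeal δ e i (Ii i) := by
    obtain ⟨w, -, hw0, hwr⟩ := exists_wordRank_eq_rnkIdeal δ e (hIi i)
    exact hwr ▸ one_lt_wordRank_of_theta_ne_zero δ e hw0
  let T := ((factorMonoid_finite δ e i).subset (hIi i).1.1).toFinset.filter (· ≠ 0)
  have hT : ∀ g ∈ T, g ∈ Ii i ∧ g ≠ 0 := by simp [T]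
  choose! word hword using fun g (hg : g ∈ T) =>
    exists_uRepresents_wordRank_eq_rnkIdeal he_surj (hIi i) hi (hT g hg).1 (hT g hg).2
  obtain ⟨R, hRT, hRtrans, hcover⟩ := T.exists_transGen_transversal (sigmaRel δ e i u)
  refine ⟨insert 0 R, ?_, ?_, fun g hg => ?_⟩
  · simpa [Set.insert_subset_iff] using ⟨(hIi i).2.1, fun g hg => (hT g (hRT hg)).1⟩
  · refine (Finset.card_insert_le 0 R).trans (Nat.add_le_add_right ?_ 1)
    exact card_le_packingNumber_two (S := fun g => imageSet δ (word g)) hr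
      (fun g hg => (hword g (hRT hg)).2) fun g hg f hf hgf => hRtrans g hg f hf
        (.single (Or.inr ⟨word g, word f, (hword g (hRT hg)).1, (hword f (hRT hf)).1, hgf⟩))
  · by_cases hg0 : g = 0
    · exact ⟨0, Finset.mem_insert_self 0 R, .single (Or.inl hg0)⟩
    · obtain ⟨f, hf, hgf⟩ := hcover g (by simp [T, hg, hg0])
      exact ⟨f, Finset.mem_insert_of_mem hf, hgf⟩

theorem stmt5 {Q A : Type*} [Fintype Q] [DecidableEq Q] (δ : Q → A → Q)
    {k : ℕ} {nn : Fin k → ℕ}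
    (e : Ralg δ →ₐ[ℂ] ∀ i : Fin k, Matrix (Fin (nn i)) (Fin (nn i)) ℂ)
    (he_surj : Function.Surjective e)
    (he_ker : ∀ x : Ralg δ, e x = 0 ↔ (x : (Module.End ℂ (Wperp Q))ᵐᵒᵖ) ∈ RadSet δ)
    (Ii : ∀ i : Fin k, Set (Matrix (Fin (nn i)) (Fin (nn i)) ℂ))
    (hIi : ∀ i : Fin k, IsZeroMinimalIdeal (factorMonoid δ e i) (Ii i))
    (hIuniq : ∀ (i : Fin k) (J : Set (Matrix (Fin (nn i)) (Fin (nn i)) ℂ)),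
      IsZeroMinimalIdeal (factorMonoid δ e i) J → J = Ii i)
    (hn : 2 ≤ Fintype.card Q) (hsync : IsSynchronizing δ)
    (v u : List A) (hu : IsVMinimal δ e v u) (i : Fin k) (hi : i ∈ suppW δ e u) :
    ∃ R : Finset (Matrix (Fin (nn i)) (Fin (nn i)) ℂ),
      ↑R ⊆ Ii i ∧
      R.card ≤ packingNumber 2 (rnkIdeal δ e i (Ii i)) (Fintype.card Q) + 1 ∧
      ∀ g ∈ Ii i, ∃ h ∈ R, Relation.TransGen (sigmaRel δ e i u) g h :=
  stmt5_general δ e he_surj Ii hIi u i hi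

end
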